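/- arXiv:1903.01208 — 6 statements merged into one kernel-verified Lean document; each statement's English description precedes it below -/
import Mathlib

section
/- Let A ∈ ℝ^{m×n} be a matrix with unit ℓ²-norm columns a₁,…,aₙ, partitioned into N ≥ 2 blocks A = [A₁,…,A_N] via a block-assignment map π : {1,…,n} → {1,…,N}. Suppose μ > 0 is such that |⟨a_j, a_k⟩| ≤ μ for all j ≠ k, and there are constants α_i ∈ [0,1] such that |⟨a_j, a_k⟩| ≤ α_i μ whenever j ≠ k and π(j) = π(k) = i; set α_max = max_{1≤i≤N} α_i. If x ∈ ℝⁿ satisfies Ax = b and ‖x‖₀ < N(1 + α_max μ)/(2(N − 1 + α_max)μ), then x is the unique sparsest solution: every y ∈ ℝⁿ with Ay = b and ‖y‖₀ ≤ ‖x‖₀ satisfies y = x. -/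
/-!
If `A z = 0` with `z ≠ 0`, expanding `0 = zᵀ (AᵀA) z` and bounding every off-diagonal Gram entry
by `μ` across blocks and by `β = αmax μ` within a block gives
`‖z‖₂² ≤ μ ‖z‖₁² - (μ - β) ∑ᵢ ‖z_{block i}‖₁² - β ‖z‖₂²`.
Cauchy–Schwarz over the `N` blocks and over the support of `z` turns this into the spark-type bound
`N (1 + β) ≤ ((N - 1) μ + β) ‖z‖₀`. Two solutions `x ≠ y` with `‖y‖₀ ≤ ‖x‖₀` would give
`z = y - x` with `‖z‖₀ ≤ 2 ‖x‖₀`, contradicting the sparsity assumption on `x`.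
-/

/-- The number of nonzero entries of a vector (`‖x‖₀`). -/
noncomputable def l0 {n : ℕ} (x : Fin n → ℝ) : ℕ :=
  (Finset.univ.filter fun j => x j ≠ 0).card

open Finset Matrix

lemma l0_sub_le {n : ℕ} (x y : Fin n → ℝ) : l0 (x - y) ≤ l0 x + l0 y := by
  refine (card_le_card fun j hj => ?_).trans (card_union_le _ _)
  simp only [mem_filter, mem_union, mem_univ, true_and, Pi.sub_apply] at hj ⊢
  by_contra! h
  exact hj (by rw [h.1, h.2, sub_zero])

lemma sq_sum_abs_le_l0_mul_sum_sq {n : ℕ} (z : Fin n → ℝ) :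
    (∑ j, |z j|) ^ 2 ≤ l0 z * ∑ j, z j ^ 2 := by
  set S := univ.filter fun j => z j ≠ 0
  have hsupp : ∑ j, |z j| = ∑ j ∈ S, |z j| :=
    (sum_subset (subset_univ S) fun j _ hj => by simp_all [S]).symm
  calc (∑ j, |z j|) ^ 2 = (∑ j ∈ S, |z j|) ^ 2 := by rw [hsupp]
    _ ≤ S.card * ∑ j ∈ S, |z j| ^ 2 := sq_sum_le_card_mul_sum_sq
    _ ≤ l0 z * ∑ j, z j ^ 2 := by
      simp only [sq_abs]
      exact mul_le_mul_of_nonneg_left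
        (sum_le_sum_of_subset_of_nonneg (subset_univ S) fun j _ _ => sq_nonneg _) (Nat.cast_nonneg _)

section Quadratic

variable {ι κ : Type*} [Fintype ι] [Fintype κ] [DecidableEq κ]

lemma sum_sq_le_of_dotProduct_mulVec_eq_zero [DecidableEq ι] (G : Matrix ι ι ℝ)
    (hdiag : ∀ j, G j j = 1) (c : ι → ι → ℝ) (hc : ∀ j k, j ≠ k → |G j k| ≤ c j k) {z : ι → ℝ}
    (hz : z ⬝ᵥ G *ᵥ z = 0) :
    ∑ j, z j ^ 2 ≤ ∑ j, ∑ k ∈ univ.erase j, |z j| * |z k| * c j k := by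
  have hrow : ∀ j, z j ^ 2 - ∑ k ∈ univ.erase j, |z j| * |z k| * c j k ≤ z j * (G *ᵥ z) j := by
    intro j
    rw [mulVec, dotProduct, ← add_sum_erase _ _ (mem_univ j), hdiag j, mul_add, mul_sum,
      sub_eq_add_neg, ← sum_neg_distrib, sq, one_mul]
    refine add_le_add le_rfl (sum_le_sum fun k hk => ?_)
    have hjk : j ≠ k := (ne_of_mem_erase hk).symm
    calc -(|z j| * |z k| * c j k) ≤ -(|z j| * |z k| * |G j k|) :=
          neg_le_neg (mul_le_mul_of_nonneg_left (hc j k hjk) (by positivity))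
      _ = -|z j * (G j k * z k)| := by rw [abs_mul, abs_mul]; ring
      _ ≤ z j * (G j k * z k) := neg_abs_le _
  have := sum_le_sum fun j (_ : j ∈ univ) => hrow j
  rw [sum_sub_distrib, ← dotProduct, hz] at this
  linarith

lemma sum_sum_ite_eq_sum_sq_fiber (π : ι → κ) (w : ι → ℝ) :
    ∑ j, ∑ k, (if π j = π k then w j * w k else 0) =
      ∑ i, (∑ j ∈ univ.filter (π · = i), w j) ^ 2 := by
  have hrow : ∀ j, ∑ k, (if π j = π k then w j * w k else 0) =
      w j * ∑ k ∈ univ.filter (π · = π j), w k := by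
    intro j
    rw [mul_sum, sum_filter]
    exact sum_congr rfl fun k _ => by simp [eq_comm]
  simp_rw [hrow, sq, sum_mul]
  rw [← sum_fiberwise univ π]
  refine sum_congr rfl fun i _ => sum_congr rfl fun j hj => ?_
  rw [(mem_filter.1 hj).2]

lemma card_mul_sum_offDiag_le [DecidableEq ι] (π : ι → κ) (w : ι → ℝ) {β μ : ℝ} (hβμ : β ≤ μ) :
    Fintype.card κ * ∑ j, ∑ k ∈ univ.erase j, w j * w k * (if π j = π k then β else μ) ≤
      ((Fintype.card κ - 1) * μ + β) * (∑ j, w j) ^ 2 - Fintype.card κ * β * ∑ j, w j ^ 2 := by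
  set s : κ → ℝ := fun i => ∑ j ∈ univ.filter (π · = i), w j
  have hsplit : ∀ j k, w j * w k * (if π j = π k then β else μ) =
      μ * (w j * w k) - (μ - β) * (if π j = π k then w j * w k else 0) := by
    intro j k; split_ifs <;> ring
  have hoff : ∑ j, ∑ k ∈ univ.erase j, w j * w k * (if π j = π k then β else μ) =
      μ * (∑ j, w j) ^ 2 - (μ - β) * ∑ i, s i ^ 2 - β * ∑ j, w j ^ 2 := by
    simp_rw [sum_erase_eq_sub (mem_univ _), sum_sub_distrib, hsplit, sum_sub_distrib, ← mul_sum,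
      sum_sum_ite_eq_sum_sq_fiber, sq (∑ j, w j), sum_mul_sum, if_true, mul_sum]
    congr 1
    exact sum_congr rfl fun j _ => by ring
  have hcs : (∑ j, w j) ^ 2 ≤ Fintype.card κ * ∑ i, s i ^ 2 := by
    rw [← sum_fiberwise univ π w]
    exact sq_sum_le_card_mul_sum_sq
  rw [hoff]
  nlinarith [mul_le_mul_of_nonneg_left hcs (sub_nonneg.2 hβμ)]

end Quadratic

lemma card_mul_le_mul_l0_of_mulVec_eq_zero {m n N : ℕ} (A : Matrix (Fin m) (Fin n) ℝ)
    (π : Fin n → Fin N) (hunit : ∀ j, ∑ i, A i j * A i j = 1) {μ β : ℝ}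
    (hcoh : ∀ j k, j ≠ k → |∑ i, A i j * A i k| ≤ μ) (hβ0 : 0 ≤ β) (hβμ : β ≤ μ)
    (hblock : ∀ j k, j ≠ k → π j = π k → |∑ i, A i j * A i k| ≤ β)
    {z : Fin n → ℝ} (hz : A *ᵥ z = 0) (hz0 : z ≠ 0) :
    N * (1 + β) ≤ ((N - 1) * μ + β) * l0 z := by
  obtain ⟨j₀, hj₀⟩ := Function.ne_iff.mp hz0
  have hN : (1 : ℝ) ≤ N := by exact_mod_cast (π j₀).pos
  have hgram : ∀ j k, (Aᵀ * A) j k = ∑ i, A i j * A i k := fun j k => by simp [mul_apply]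
  have hquad : z ⬝ᵥ (Aᵀ * A) *ᵥ z = 0 := by
    rw [← mulVec_mulVec, hz, mulVec_zero, dotProduct_zero]
  have hQ := sum_sq_le_of_dotProduct_mulVec_eq_zero (Aᵀ * A)
    (fun j => (hgram j j).trans (hunit j)) (fun j k => if π j = π k then β else μ)
    (fun j k hjk => by
      rw [hgram]; split_ifs with h
      exacts [hblock j k hjk h, hcoh j k hjk]) hquad
  have hoff := card_mul_sum_offDiag_le π (fun j => |z j|) hβμ
  simp only [Fintype.card_fin, sq_abs] at hoff
  have hT := sq_sum_abs_le_l0_mul_sum_sq z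
  have hpos : 0 < ∑ j, z j ^ 2 :=
    sum_pos' (fun j _ => sq_nonneg _) ⟨j₀, mem_univ _, pow_two_pos_of_ne_zero hj₀⟩
  have hcoef : 0 ≤ (N - 1) * μ + β := by nlinarith
  refine le_of_mul_le_mul_right ?_ hpos
  nlinarith [mul_le_mul_of_nonneg_left hT hcoef]

theorem piecewise_uniqueness_general {m n N : ℕ}
    (A : Matrix (Fin m) (Fin n) ℝ) (π : Fin n → Fin N)
    (hunit : ∀ j, ∑ i, A i j * A i j = 1)
    (μ : ℝ) (hμ : 0 < μ)
    (hcoh : ∀ j k, j ≠ k → |∑ i, A i j * A i k| ≤ μ)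
    (α : Fin N → ℝ) (hα0 : ∀ i, 0 ≤ α i) (hα1 : ∀ i, α i ≤ 1)
    (hblock : ∀ j k, j ≠ k → π j = π k → |∑ i, A i j * A i k| ≤ α (π j) * μ)
    (αmax : ℝ) (hαmax : IsGreatest (Set.range α) αmax)
    (x : Fin n → ℝ) (b : Fin m → ℝ) (hx : A.mulVec x = b)
    (hsparse : (l0 x : ℝ) < (N : ℝ) * (1 + αmax * μ) / (2 * ((N : ℝ) - 1 + αmax) * μ)) :
    ∀ y : Fin n → ℝ, A.mulVec y = b → l0 y ≤ l0 x → y = x := by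
  intro y hy hle
  by_contra hne
  obtain ⟨i₀, hi₀⟩ := hαmax.1
  have hβ0 : 0 ≤ αmax * μ := mul_nonneg (hi₀ ▸ hα0 i₀) hμ.le
  have hblock' : ∀ j k, j ≠ k → π j = π k → |∑ i, A i j * A i k| ≤ αmax * μ := fun j k hjk h =>
    (hblock j k hjk h).trans (mul_le_mul_of_nonneg_right (hαmax.2 ⟨π j, rfl⟩) hμ.le)
  have hspark := card_mul_le_mul_l0_of_mulVec_eq_zero A π hunit hcoh
    hβ0 (mul_le_of_le_one_left hμ.le (hi₀ ▸ hα1 i₀)) hblock'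
    (by rw [mulVec_sub, hy, hx, sub_self]) (sub_ne_zero.2 hne)
  have hcard : (l0 (y - x) : ℝ) ≤ 2 * l0 x := by
    have := l0_sub_le y x
    exact_mod_cast (by omega : l0 (y - x) ≤ 2 * l0 x)
  obtain ⟨j₀, -⟩ := Function.ne_iff.mp hne
  have hN : (1 : ℝ) ≤ N := by exact_mod_cast (π j₀).pos
  have hcoef : 0 ≤ (N - 1) * μ + αmax * μ :=
    add_nonneg (mul_nonneg (by linarith) hμ.le) hβ0
  have hbound : (N : ℝ) * (1 + αmax * μ) ≤ 2 * ((N : ℝ) - 1 + αmax) * μ * l0 x := by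
    nlinarith [mul_le_mul_of_nonneg_left hcard hcoef]
  have hden : 0 < 2 * ((N : ℝ) - 1 + αmax) * μ :=
    pos_of_mul_pos_left ((mul_pos (by linarith) (by linarith)).trans_le hbound)
      (Nat.cast_nonneg _)
  rw [lt_div_iff₀ hden] at hsparse
  linarith

/-- **Uniqueness of piecewise sparse recovery.**
If `A` has unit-norm columns partitioned into `N ≥ 2` blocks by `π`, overall coherence
bounded by `μ > 0`, within-block coherence of block `i` bounded by `α i * μ` with
`α i ∈ [0,1]`, `αmax = max_i α i`, and `x` solves `A x = b` with
`‖x‖₀ < N (1 + αmax μ) / (2 (N - 1 + αmax) μ)`, then `x` is the unique sparsest solution. -/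
theorem piecewise_uniqueness {m n N : ℕ} (hN : 2 ≤ N)
    (A : Matrix (Fin m) (Fin n) ℝ) (π : Fin n → Fin N)
    (hunit : ∀ j, ∑ i, A i j * A i j = 1)
    (μ : ℝ) (hμ : 0 < μ)
    (hcoh : ∀ j k, j ≠ k → |∑ i, A i j * A i k| ≤ μ)
    (α : Fin N → ℝ) (hα0 : ∀ i, 0 ≤ α i) (hα1 : ∀ i, α i ≤ 1)
    (hblock : ∀ j k, j ≠ k → π j = π k → |∑ i, A i j * A i k| ≤ α (π j) * μ)
    (αmax : ℝ) (hαmax : IsGreatest (Set.range α) αmax)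
    (x : Fin n → ℝ) (b : Fin m → ℝ) (hx : A.mulVec x = b)
    (hsparse : (l0 x : ℝ) < (N : ℝ) * (1 + αmax * μ) / (2 * ((N : ℝ) - 1 + αmax) * μ)) :
    ∀ y : Fin n → ℝ, A.mulVec y = b → l0 y ≤ l0 x → y = x :=
  piecewise_uniqueness_general A π hunit μ hμ hcoh α hα0 hα1 hblock αmax hαmax x b hx hsparse
end

section
/- Let A ∈ ℝ^{m×n} be a matrix with unit ℓ²-norm columns a₁,…,aₙ, partitioned into N blocks via a block-assignment map π : {1,…,n} → {1,…,N}. Suppose μ > 0 satisfies |⟨a_j, a_k⟩| ≤ μ for all j ≠ k, and α_max ∈ [0,1] satisfies |⟨a_j, a_k⟩| ≤ α_max μ whenever j ≠ k lie in the same block. Let z ∈ ℝⁿ be a nonzero vector with Az = 0, and for each i let s_i denote the number of nonzero entries of z whose index lies in block i. If (s_i − 1)·α_max·μ < 1 for every i, then Σ_{i=1}^{N} s_i μ / (1 + α_max μ + (1 − α_max) s_i μ) ≥ 1. -/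
/-!
Write `G = AᵀA` for the Gram matrix, so `Gz = 0` and `G j j = 1`. Hence every
`|z j|` is bounded by the off-diagonal row sum `∑_{k ≠ j} |G j k| |z k|`, which the coherence
bounds control in terms of the ℓ¹-mass `B i` of `z` on the block of `j` and the total mass `S`:
`(1 + αμ) |z j| ≤ αμ B(π j) + μ (S - B(π j))`. Summing this over the `s i` support indices of
block `i` gives `(1 + αμ + (1 - α) s i μ) B i ≤ s i μ S`, and since the `B i / S` sum to `1`,
the claim follows.
-/

open Finset Matrix

theorem Matrix.eq_neg_sum_erase_of_mulVec_eq_zero {ι R : Type*} [Fintype ι] [DecidableEq ι]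
    [Ring R] {G : Matrix ι ι R} {z : ι → R} (hGz : G *ᵥ z = 0) {j : ι} (hjj : G j j = 1) :
    z j = -∑ k ∈ univ.erase j, G j k * z k := by
  have h := congrFun hGz j
  rw [mulVec, dotProduct, ← add_sum_erase _ _ (mem_univ j), hjj, one_mul] at h
  exact eq_neg_of_add_eq_zero_left h

theorem Matrix.abs_le_sum_erase_of_mulVec_eq_zero {ι : Type*} [Fintype ι] [DecidableEq ι]
    {G : Matrix ι ι ℝ} {z : ι → ℝ} (hGz : G *ᵥ z = 0) {j : ι} (hjj : G j j = 1)
    {c : ι → ℝ} (hc : ∀ k, k ≠ j → |G j k| ≤ c k) :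
    |z j| ≤ ∑ k ∈ univ.erase j, c k * |z k| := by
  rw [eq_neg_sum_erase_of_mulVec_eq_zero hGz hjj, abs_neg]
  refine (abs_sum_le_sum_abs _ _).trans (sum_le_sum fun k hk => ?_)
  rw [abs_mul]
  exact mul_le_mul_of_nonneg_right (hc k (ne_of_mem_erase hk)) (abs_nonneg _)

section BlockSum

variable {ι κ : Type*} [Fintype ι] [DecidableEq κ]

def blockSum (π : ι → κ) (w : ι → ℝ) (i : κ) : ℝ :=
  ∑ k ∈ univ.filter (π · = i), w k

theorem sum_blockSum [Fintype κ] (π : ι → κ) (w : ι → ℝ) :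
    ∑ i, blockSum π w i = ∑ k, w k :=
  sum_fiberwise _ _ _

theorem sum_ite_mul_eq_blockSum (π : ι → κ) (w : ι → ℝ) (i : κ) (a b : ℝ) :
    ∑ k, (if π k = i then a else b) * w k
      = a * blockSum π w i + b * (∑ k, w k - blockSum π w i) := by
  rw [← sum_filter_add_sum_filter_not univ (π · = i) w]
  simp only [ite_mul, sum_ite, ← mul_sum, blockSum]
  ring

variable {π : ι → κ} {z : ι → ℝ} {α μ : ℝ}

theorem one_add_mul_abs_le_blockSum [DecidableEq ι] {G : Matrix ι ι ℝ} (hGz : G *ᵥ z = 0)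
    (hdiag : ∀ j, G j j = 1) (hcoh : ∀ j k, j ≠ k → |G j k| ≤ μ)
    (hblock : ∀ j k, j ≠ k → π j = π k → |G j k| ≤ α * μ) (j : ι) :
    (1 + α * μ) * |z j| ≤ α * μ * blockSum π (|z ·|) (π j)
      + μ * (∑ k, |z k| - blockSum π (|z ·|) (π j)) := by
  set c : ι → ℝ := fun k => if π k = π j then α * μ else μ
  have hrow : |z j| ≤ ∑ k ∈ univ.erase j, c k * |z k| :=
    abs_le_sum_erase_of_mulVec_eq_zero hGz (hdiag j) fun k hkj => by
      by_cases hk : π k = π j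
      · simpa [c, hk] using hblock j k hkj.symm hk.symm
      · simpa [c, hk] using hcoh j k hkj.symm
  have hsplit := add_sum_erase univ (fun k => c k * |z k|) (mem_univ j)
  rw [sum_ite_mul_eq_blockSum] at hsplit
  simp only [c, if_pos rfl] at hsplit hrow
  linarith

theorem blockSum_mul_le (hpt : ∀ j, (1 + α * μ) * |z j| ≤ α * μ * blockSum π (|z ·|) (π j)
      + μ * (∑ k, |z k| - blockSum π (|z ·|) (π j))) (i : κ) :
    let s : ℝ := #(univ.filter fun j => π j = i ∧ z j ≠ 0)
    (1 + α * μ + (1 - α) * s * μ) * blockSum π (|z ·|) i ≤ s * μ * ∑ k, |z k| := by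
  intro s
  set B := blockSum π (|z ·|) i
  have hB : B = ∑ j ∈ univ.filter fun j => π j = i ∧ z j ≠ 0, |z j| := by
    rw [← filter_filter, sum_filter_of_ne fun k _ hk => abs_ne_zero.mp hk]
    rfl
  set T := univ.filter fun j => π j = i ∧ z j ≠ 0
  have hsum : ∑ j ∈ T, (1 + α * μ) * |z j| ≤ #T • (α * μ * B + μ * (∑ k, |z k| - B)) :=
    sum_le_card_nsmul _ _ _ fun j hj => by
      obtain ⟨rfl, -⟩ := (mem_filter.mp hj).2
      exact hpt j
  rw [← mul_sum, ← hB, nsmul_eq_mul] at hsum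
  linear_combination hsum

end BlockSum

theorem one_le_sum_div_of_mul_le {κ : Type*} [Fintype κ] {b t D : κ → ℝ} {S : ℝ} (hS : 0 < S)
    (hsum : ∑ i, b i = S) (hD : ∀ i, 0 < D i) (h : ∀ i, D i * b i ≤ t i * S) :
    1 ≤ ∑ i, t i / D i :=
  calc (1 : ℝ) = ∑ i, b i / S := by rw [← sum_div, hsum, div_self hS.ne']
    _ ≤ ∑ i, t i / D i := sum_le_sum fun i _ => by
      rw [div_le_div_iff₀ hS (hD i)]
      linarith [h i]

theorem kernel_blockwise_inequality_general {m n N : ℕ}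
    (A : Matrix (Fin m) (Fin n) ℝ) (π : Fin n → Fin N)
    (hunit : ∀ j, ∑ i, A i j * A i j = 1)
    (μ : ℝ) (hμ : 0 < μ)
    (hcoh : ∀ j k, j ≠ k → |∑ i, A i j * A i k| ≤ μ)
    (αmax : ℝ) (hα0 : 0 ≤ αmax) (hα1 : αmax ≤ 1)
    (hblock : ∀ j k, j ≠ k → π j = π k → |∑ i, A i j * A i k| ≤ αmax * μ)
    (z : Fin n → ℝ) (hz : z ≠ 0) (hker : A.mulVec z = 0)
    (s : Fin N → ℕ)
    (hs : ∀ i, s i = (Finset.univ.filter fun j => π j = i ∧ z j ≠ 0).card) :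
    1 ≤ ∑ i, (s i : ℝ) * μ / (1 + αmax * μ + (1 - αmax) * (s i : ℝ) * μ) := by
  have hG : ∀ j k, (Aᵀ * A) j k = ∑ i, A i j * A i k := fun j k => by simp [mul_apply]
  have hGz : (Aᵀ * A) *ᵥ z = 0 := by rw [← mulVec_mulVec, hker, mulVec_zero]
  have hpt := one_add_mul_abs_le_blockSum (π := π) hGz (by simpa [hG] using hunit)
    (by simpa [hG] using hcoh) (by simpa [hG] using hblock)
  have hS : 0 < ∑ k, |z k| := by
    obtain ⟨j, hj⟩ := Function.ne_iff.mp hz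
    exact sum_pos' (fun k _ => abs_nonneg _) ⟨j, mem_univ j, abs_pos.mpr hj⟩
  refine one_le_sum_div_of_mul_le hS (sum_blockSum π _) (fun i => ?_) fun i => ?_
  · have := mul_nonneg (mul_nonneg (sub_nonneg.2 hα1) (Nat.cast_nonneg (s i))) hμ.le
    linarith [mul_nonneg hα0 hμ.le]
  · simpa only [hs i] using blockSum_mul_le hpt i

/-- **Key inequality on blockwise supports of kernel vectors.**
If `A` has unit-norm columns partitioned into `N` blocks by `π`, overall coherence bounded
by `μ > 0`, within-block coherence bounded by `αmax * μ` with `αmax ∈ [0,1]`, and `z ≠ 0`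
satisfies `A z = 0` with `s i` nonzero entries in block `i`, and `(s i - 1) αmax μ < 1`
for every `i`, then `∑ i, s i μ / (1 + αmax μ + (1 - αmax) s i μ) ≥ 1`. -/
theorem kernel_blockwise_inequality {m n N : ℕ}
    (A : Matrix (Fin m) (Fin n) ℝ) (π : Fin n → Fin N)
    (hunit : ∀ j, ∑ i, A i j * A i j = 1)
    (μ : ℝ) (hμ : 0 < μ)
    (hcoh : ∀ j k, j ≠ k → |∑ i, A i j * A i k| ≤ μ)
    (αmax : ℝ) (hα0 : 0 ≤ αmax) (hα1 : αmax ≤ 1)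
    (hblock : ∀ j k, j ≠ k → π j = π k → |∑ i, A i j * A i k| ≤ αmax * μ)
    (z : Fin n → ℝ) (hz : z ≠ 0) (hker : A.mulVec z = 0)
    (s : Fin N → ℕ)
    (hs : ∀ i, s i = (Finset.univ.filter fun j => π j = i ∧ z j ≠ 0).card)
    (hsmall : ∀ i, ((s i : ℝ) - 1) * αmax * μ < 1) :
    1 ≤ ∑ i, (s i : ℝ) * μ / (1 + αmax * μ + (1 - αmax) * (s i : ℝ) * μ) :=
  kernel_blockwise_inequality_general A π hunit μ hμ hcoh αmax hα0 hα1 hblock z hz hker s hs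
end

section
/- Let N ≥ 1 be an integer, μ > 0 and α ∈ [0,1] real numbers, and let s₁,…,s_N be nonnegative real numbers. If Σ_{i=1}^{N} s_i μ / (1 + αμ + (1 − α) s_i μ) ≥ 1, then Σ_{i=1}^{N} s_i ≥ N(1 + αμ)/((N − 1 + α)μ). -/
/-!
The map `x ↦ x / (A + B x)` is concave on `x ≥ 0` when `A > 0`, `B ≥ 0`, so it lies below its
tangent line at any point `x₀`.  Summing the tangent bound at `x₀ = A / (N - B)`, where the map
takes the value `1 / N`, turns the constraint `1 ≤ ∑ xᵢ / (A + B xᵢ)` into `N x₀ ≤ ∑ xᵢ`.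
Here `xᵢ = sᵢ μ`, `A = 1 + αμ` and `B = 1 - α`.
-/

open Finset

section TangentBound

variable {A B x₀ : ℝ}

theorem div_add_mul_le_tangent (hA : 0 < A) (hB : 0 ≤ B) (hx₀ : 0 ≤ x₀) {x : ℝ} (hx : 0 ≤ x) :
    x / (A + B * x) ≤ x₀ / (A + B * x₀) + A / (A + B * x₀) ^ 2 * (x - x₀) := by
  have hD : 0 < A + B * x := by positivity
  have hD₀ : 0 < A + B * x₀ := by positivity
  have gap : x₀ / (A + B * x₀) + A / (A + B * x₀) ^ 2 * (x - x₀) - x / (A + B * x)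
      = A * B * (x - x₀) ^ 2 / ((A + B * x₀) ^ 2 * (A + B * x)) := by
    field_simp
    ring
  have : 0 ≤ A * B * (x - x₀) ^ 2 / ((A + B * x₀) ^ 2 * (A + B * x)) := by positivity
  linarith

theorem sum_div_add_mul_le_tangent {ι : Type*} (t : Finset ι) (x : ι → ℝ)
    (hA : 0 < A) (hB : 0 ≤ B) (hx₀ : 0 ≤ x₀) (hx : ∀ i ∈ t, 0 ≤ x i) :
    ∑ i ∈ t, x i / (A + B * x i)
      ≤ #t * (x₀ / (A + B * x₀)) + A / (A + B * x₀) ^ 2 * (∑ i ∈ t, x i - #t * x₀) := by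
  calc ∑ i ∈ t, x i / (A + B * x i)
      ≤ ∑ i ∈ t, (x₀ / (A + B * x₀) + A / (A + B * x₀) ^ 2 * (x i - x₀)) :=
        sum_le_sum fun i hi => div_add_mul_le_tangent hA hB hx₀ (hx i hi)
    _ = #t * (x₀ / (A + B * x₀)) + A / (A + B * x₀) ^ 2 * (∑ i ∈ t, x i - #t * x₀) := by
        rw [sum_add_distrib, ← mul_sum, sum_sub_distrib]
        simp

end TangentBound

/-- When `#t = B` the bound reads `0 ≤ ∑ i ∈ t, x i`, since division by zero gives `0`. -/
theorem card_mul_div_le_sum_of_one_le_sum_div {ι : Type*} (t : Finset ι) (x : ι → ℝ)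
    {A B : ℝ} (hA : 0 < A) (hB : 0 ≤ B) (hBt : B ≤ #t) (hx : ∀ i ∈ t, 0 ≤ x i)
    (h : 1 ≤ ∑ i ∈ t, x i / (A + B * x i)) :
    #t * A / (#t - B) ≤ ∑ i ∈ t, x i := by
  rcases (sub_nonneg.mpr hBt).eq_or_lt with hK | hK
  · rw [← hK, div_zero]
    exact sum_nonneg hx
  set x₀ := A / (#t - B)
  have hx₀ : 0 ≤ x₀ := by positivity
  have value_at_x₀ : #t * (x₀ / (A + B * x₀)) = 1 := by
    simp only [x₀]
    field_simp
    ring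
  have slope_pos : 0 < A / (A + B * x₀) ^ 2 := by positivity
  have tangent := sum_div_add_mul_le_tangent t x hA hB hx₀ hx
  rw [value_at_x₀] at tangent
  have excess_nonneg : 0 ≤ ∑ i ∈ t, x i - #t * x₀ :=
    (mul_nonneg_iff_of_pos_left slope_pos).mp (by linarith)
  rw [mul_div_assoc]
  linarith

/-- **Optimization step of the spark bound.**
If `N ≥ 1`, `μ > 0`, `α ∈ [0,1]`, the `s i` are nonnegative reals, and
`∑ i, s i μ / (1 + αμ + (1 - α) s i μ) ≥ 1`, then
`∑ i, s i ≥ N (1 + αμ) / ((N - 1 + α) μ)`. -/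
theorem sum_lower_bound_of_constraint {N : ℕ} (hN : 1 ≤ N)
    (μ α : ℝ) (hμ : 0 < μ) (hα0 : 0 ≤ α) (hα1 : α ≤ 1)
    (s : Fin N → ℝ) (hs : ∀ i, 0 ≤ s i)
    (h : 1 ≤ ∑ i, s i * μ / (1 + α * μ + (1 - α) * s i * μ)) :
    (N : ℝ) * (1 + α * μ) / (((N : ℝ) - 1 + α) * μ) ≤ ∑ i, s i := by
  have hN' : (1 : ℝ) ≤ N := by exact_mod_cast hN
  have hB : 1 - α ≤ #(univ : Finset (Fin N)) := by
    simp only [card_univ, Fintype.card_fin]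
    linarith
  have bound := card_mul_div_le_sum_of_one_le_sum_div univ (fun i => s i * μ)
    (A := 1 + α * μ) (by positivity) (by linarith) hB
    (fun i _ => mul_nonneg (hs i) hμ.le) (by simpa only [mul_assoc] using h)
  rw [show (N : ℝ) - 1 + α = N - (1 - α) by ring, ← div_div, div_le_iff₀ hμ, sum_mul]
  simpa only [card_univ, Fintype.card_fin] using bound
end

section
/- Let A ∈ ℝ^{m×n} have unit ℓ²-norm columns a₁,…,aₙ, partitioned into N blocks via π : {1,…,n} → {1,…,N}. Suppose μ > 0 satisfies |⟨a_j, a_k⟩| ≤ μ for all j ≠ k, and there are constants α_i ∈ [0,1) with |⟨a_j, a_k⟩| ≤ α_i μ whenever j ≠ k and π(j) = π(k) = i. Let S ⊆ {1,…,n} be a support set with S_i = S ∩ (block i) of cardinality s_i ≥ 1 for each i, and let Z be an index maximizing (1 + α_i μ)/((1 − α_i) s_i) over i = 1,…,N. If 2·Σ_{i=1}^{N} μ s_i/(1 + α_i μ + (1 − α_i) μ s_i) < (1 + α_Z μ + 2(1 − α_Z)μ s_Z)/(1 + α_Z μ + (1 − α_Z)μ s_Z), then the Gram matrix A_Sᵀ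 A_S is invertible and the Exact Recovery Condition holds: ‖(A_Sᵀ A_S)⁻¹ A_Sᵀ a_j‖₁ < 1 for every column index j ∉ S. -/
/-!
Write `β i = 1 + α i μ + (1 - α i) μ s i` and `c = ∑ i, μ s i / β i`. For any `x`, isolating
`x k` in row `k` of `G x` (with `G = A_Sᵀ A_S`, whose diagonal is `1`) and bounding the in-block and
out-of-block entries by `α i μ` and `μ`, then summing over the block `i` of `k`, gives
`β i ‖x_i‖₁ ≤ ‖(G x)_i‖₁ + μ s i ‖x‖₁`. Dividing by `β i` and summing over blocks,
`‖x‖₁ ≤ ∑ i, ‖(G x)_i‖₁ / β i + c ‖x‖₁`, so `G` is injective once `c < 1`. For `x = G⁻¹ A_Sᵀ a_j`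
the vector `G x = A_Sᵀ a_j` has entries at most `μ`, and at most `α i₀ μ` on the block `i₀` of `j`,
which gives `(1 - c) ‖x‖₁ ≤ c - δ i₀` with `δ i = (1 - α i) μ s i / β i`. The choice of `Z` makes
`δ Z` the least `δ i`, and the hypothesis on `Z` says `2 c < 1 + δ Z`, hence `‖x‖₁ < 1`.
-/

/-- The Gram matrix `A_Sᵀ A_S` of the columns of `A` indexed by the finite set `S`. -/
noncomputable def gram {m n : ℕ} (A : Matrix (Fin m) (Fin n) ℝ) (S : Finset (Fin n)) :
    Matrix ↥S ↥S ℝ :=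
  Matrix.of fun j k : ↥S => ∑ i, A i (j : Fin n) * A i (k : Fin n)

open Finset
open scoped Matrix

section Weights

variable {κ : Type*} (μ : ℝ) (α : κ → ℝ) (s : κ → ℕ)

def blockWeight (i : κ) : ℝ := 1 + α i * μ + (1 - α i) * μ * s i

noncomputable def coherenceSum [Fintype κ] : ℝ := ∑ i, μ * s i / blockWeight μ α s i

noncomputable def blockGain (i : κ) : ℝ := (1 - α i) * μ * s i / blockWeight μ α s i

variable {μ α s}

lemma blockWeight_pos (hμ : 0 ≤ μ) {i : κ} (hα0 : 0 ≤ α i) (hα1 : α i ≤ 1) :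
    0 < blockWeight μ α s i := by
  unfold blockWeight
  have : 0 ≤ (1 - α i) * μ * s i := by have := sub_nonneg.2 hα1; positivity
  nlinarith [mul_nonneg hα0 hμ]

lemma blockGain_lt_one (hμ : 0 ≤ μ) {i : κ} (hα0 : 0 ≤ α i) (hα1 : α i ≤ 1) :
    blockGain μ α s i < 1 := by
  rw [blockGain, div_lt_one (blockWeight_pos hμ hα0 hα1), blockWeight]
  nlinarith [mul_nonneg hα0 hμ]

lemma one_add_blockGain (hμ : 0 ≤ μ) {i : κ} (hα0 : 0 ≤ α i) (hα1 : α i ≤ 1) :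
    1 + blockGain μ α s i =
      (1 + α i * μ + 2 * (1 - α i) * μ * s i) / blockWeight μ α s i := by
  have := (blockWeight_pos (s := s) hμ hα0 hα1).ne'
  rw [blockGain, eq_div_iff this, add_mul, div_mul_cancel₀ _ this, blockWeight]
  ring

lemma blockGain_le_blockGain (hμ : 0 ≤ μ) {i j : κ} (hαi : 0 ≤ α i) (hαi' : α i < 1)
    (hsi : 1 ≤ s i) (hαj : 0 ≤ α j) (hαj' : α j < 1) (hsj : 1 ≤ s j)
    (h : (1 + α i * μ) / ((1 - α i) * s i) ≤ (1 + α j * μ) / ((1 - α j) * s j)) :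
    blockGain μ α s j ≤ blockGain μ α s i := by
  have hdi : 0 < (1 - α i) * s i := mul_pos (by linarith) (by exact_mod_cast hsi)
  have hdj : 0 < (1 - α j) * s j := mul_pos (by linarith) (by exact_mod_cast hsj)
  rw [div_le_div_iff₀ hdi hdj] at h
  rw [blockGain, blockGain, div_le_div_iff₀ (blockWeight_pos hμ hαj hαj'.le)
    (blockWeight_pos hμ hαi hαi'.le), blockWeight, blockWeight]
  nlinarith [mul_le_mul_of_nonneg_left h hμ]

end Weights

section BlockCoherent

variable {ι κ : Type*} [Fintype ι] [DecidableEq κ]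

def blockSize (p : ι → κ) (i : κ) : ℕ := #{k | p k = i}

structure IsBlockCoherent (G : Matrix ι ι ℝ) (p : ι → κ) (μ : ℝ) (α : κ → ℝ) : Prop where
  diag : ∀ k, G k k = 1
  abs_le : ∀ k l, k ≠ l → |G k l| ≤ μ
  abs_le_of_eq : ∀ k l, k ≠ l → p k = p l → |G k l| ≤ α (p k) * μ

variable {G : Matrix ι ι ℝ} {p : ι → κ} {μ : ℝ} {α : κ → ℝ}

lemma IsBlockCoherent.abs_le_abs_mulVec_add (hG : IsBlockCoherent G p μ α)
    (x : ι → ℝ) (k : ι) :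
    |x k| ≤ |(G *ᵥ x) k| + α (p k) * μ * (∑ l with p l = p k, |x l| - |x k|) +
      μ * ∑ l with p l ≠ p k, |x l| := by
  classical
  have hrow : (G *ᵥ x) k = x k + ∑ l ∈ univ.erase k, G k l * x l := by
    rw [Matrix.mulVec, dotProduct, ← add_sum_erase _ _ (mem_univ k), hG.diag, one_mul]
  have hsame : ∑ l ∈ (({l | p l = p k} : Finset ι).erase k), |G k l * x l| ≤
      α (p k) * μ * (∑ l with p l = p k, |x l| - |x k|) := by
    rw [← sum_erase_add (s := {l | p l = p k}) _ (mem_filter.2 ⟨mem_univ k, rfl⟩),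
      add_sub_cancel_right, mul_sum]
    refine sum_le_sum fun l hl => ?_
    obtain ⟨hlk, hl⟩ := mem_erase.1 hl
    rw [abs_mul]
    gcongr
    exact hG.abs_le_of_eq k l hlk.symm (mem_filter.1 hl).2.symm
  have hother : ∑ l with p l ≠ p k, |G k l * x l| ≤ μ * ∑ l with p l ≠ p k, |x l| := by
    rw [mul_sum]
    refine sum_le_sum fun l hl => ?_
    rw [abs_mul]
    gcongr
    exact hG.abs_le k l fun h => (mem_filter.1 hl).2 (h ▸ rfl)
  have hsplit : ∑ l ∈ univ.erase k, |G k l * x l| =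
      ∑ l ∈ (({l | p l = p k} : Finset ι).erase k), |G k l * x l| +
        ∑ l with p l ≠ p k, |G k l * x l| := by
    rw [← sum_filter_add_sum_filter_not (univ.erase k) (fun l => p l = p k), filter_erase,
      filter_erase, erase_eq_of_notMem (s := {l | ¬p l = p k}) (by simp)]
  calc |x k| = |(G *ᵥ x) k - ∑ l ∈ univ.erase k, G k l * x l| := by
        rw [hrow, add_sub_cancel_right]
    _ ≤ |(G *ᵥ x) k| + ∑ l ∈ univ.erase k, |G k l * x l| :=
        (abs_sub _ _).trans (by gcongr; exact abs_sum_le_sum_abs _ _)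
    _ ≤ _ := by rw [hsplit, add_assoc]; gcongr

lemma IsBlockCoherent.blockWeight_mul_le (hG : IsBlockCoherent G p μ α)
    (x : ι → ℝ) (i : κ) :
    blockWeight μ α (blockSize p) i * ∑ k with p k = i, |x k| ≤
      ∑ k with p k = i, |(G *ᵥ x) k| + μ * blockSize p i * ∑ k, |x k| := by
  set u := ∑ k with p k = i, |x k|
  set U := ∑ k, |x k|
  have hrest : ∑ l with p l ≠ i, |x l| = U - u := by
    rw [eq_sub_iff_add_eq', sum_filter_add_sum_filter_not]
  have hrow : ∀ k ∈ ({k | p k = i} : Finset ι),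
      (1 + α i * μ) * |x k| ≤ |(G *ᵥ x) k| + (α i * μ * u + μ * (U - u)) := by
    intro k hk
    have := hG.abs_le_abs_mulVec_add x k
    rw [(mem_filter.1 hk).2, hrest] at this
    linarith
  have hsum := sum_le_sum hrow
  rw [← mul_sum, sum_add_distrib, sum_const, nsmul_eq_mul] at hsum
  rw [blockWeight, blockSize]
  linarith

variable [Fintype κ]

lemma IsBlockCoherent.sum_abs_le (hG : IsBlockCoherent G p μ α)
    (hβ : ∀ i, 0 < blockWeight μ α (blockSize p) i) (x : ι → ℝ) :
    ∑ k, |x k| ≤ ∑ i, (∑ k with p k = i, |(G *ᵥ x) k|) / blockWeight μ α (blockSize p) i +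
      coherenceSum μ α (blockSize p) * ∑ k, |x k| := by
  have hblock : ∀ i ∈ (univ : Finset κ), ∑ k with p k = i, |x k| ≤
      (∑ k with p k = i, |(G *ᵥ x) k|) / blockWeight μ α (blockSize p) i +
        μ * blockSize p i / blockWeight μ α (blockSize p) i * ∑ k, |x k| := by
    intro i _
    rw [div_mul_eq_mul_div, ← add_div, le_div_iff₀' (hβ i)]
    exact hG.blockWeight_mul_le x i
  calc ∑ k, |x k| = ∑ i, ∑ k with p k = i, |x k| := (sum_fiberwise _ _ _).symm
    _ ≤ _ := sum_le_sum hblock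
    _ = _ := by rw [sum_add_distrib, ← sum_mul, coherenceSum]

lemma IsBlockCoherent.isUnit [DecidableEq ι] (hG : IsBlockCoherent G p μ α)
    (hβ : ∀ i, 0 < blockWeight μ α (blockSize p) i) (hc : coherenceSum μ α (blockSize p) < 1) :
    IsUnit G := by
  rw [Matrix.isUnit_iff_isUnit_det, isUnit_iff_ne_zero, Ne, ← Matrix.exists_mulVec_eq_zero_iff]
  rintro ⟨x, hx0, hx⟩
  have hle := hG.sum_abs_le hβ x
  simp only [hx, Pi.zero_apply, abs_zero, sum_const_zero, zero_div, zero_add] at hle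
  have hU : ∑ k, |x k| ≤ 0 := by
    nlinarith [sum_nonneg fun k (_ : k ∈ univ) => abs_nonneg (x k)]
  exact hx0 <| funext fun k => abs_nonpos_iff.1 <|
    (single_le_sum (fun k _ => abs_nonneg (x k)) (mem_univ k)).trans hU

lemma sum_div_blockWeight_le_coherenceSum_sub_blockGain
    (hβ : ∀ i, 0 < blockWeight μ α (blockSize p) i)
    {b : ι → ℝ} {i₀ : κ} (hb : ∀ k, |b k| ≤ μ) (hb₀ : ∀ k, p k = i₀ → |b k| ≤ α i₀ * μ) :
    ∑ i, (∑ k with p k = i, |b k|) / blockWeight μ α (blockSize p) i ≤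
      coherenceSum μ α (blockSize p) - blockGain μ α (blockSize p) i₀ := by
  have hsize (i : κ) {t : ℝ} (ht : ∀ k, p k = i → |b k| ≤ t) :
      ∑ k with p k = i, |b k| ≤ t * blockSize p i := by
    rw [mul_comm, ← nsmul_eq_mul]
    exact sum_le_card_nsmul _ _ _ fun k hk => ht k (mem_filter.1 hk).2
  have hmain : (∑ k with p k = i₀, |b k|) / blockWeight μ α (blockSize p) i₀ ≤
      μ * blockSize p i₀ / blockWeight μ α (blockSize p) i₀ - blockGain μ α (blockSize p) i₀ :=
    calc _ ≤ α i₀ * μ * blockSize p i₀ / blockWeight μ α (blockSize p) i₀ :=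
          div_le_div_of_nonneg_right (hsize i₀ (hb₀ ·)) (hβ i₀).le
      _ = _ := by rw [blockGain]; ring
  have hrest : ∑ i ∈ univ.erase i₀, (∑ k with p k = i, |b k|) / blockWeight μ α (blockSize p) i ≤
      ∑ i ∈ univ.erase i₀, μ * blockSize p i / blockWeight μ α (blockSize p) i :=
    sum_le_sum fun i _ => div_le_div_of_nonneg_right (hsize i fun k _ => hb k) (hβ i).le
  rw [coherenceSum, ← add_sum_erase _ _ (mem_univ i₀), ← add_sum_erase _ _ (mem_univ i₀)]
  linarith

lemma IsBlockCoherent.sum_abs_inv_mulVec_lt_one [DecidableEq ι] (hG : IsBlockCoherent G p μ α)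
    (hμ : 0 ≤ μ) (hα0 : ∀ i, 0 ≤ α i) (hα1 : ∀ i, α i ≤ 1)
    {b : ι → ℝ} {i₀ : κ} (hb : ∀ k, |b k| ≤ μ) (hb₀ : ∀ k, p k = i₀ → |b k| ≤ α i₀ * μ)
    (hc : 2 * coherenceSum μ α (blockSize p) < 1 + blockGain μ α (blockSize p) i₀) :
    ∑ k, |(G⁻¹ *ᵥ b) k| < 1 := by
  have hβ i := blockWeight_pos (s := blockSize p) hμ (hα0 i) (hα1 i)
  have hc1 : coherenceSum μ α (blockSize p) < 1 := by
    linarith [blockGain_lt_one (s := blockSize p) hμ (hα0 i₀) (hα1 i₀)]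
  have hGx : G *ᵥ (G⁻¹ *ᵥ b) = b := by
    rw [Matrix.mulVec_mulVec,
      Matrix.mul_nonsing_inv _ ((Matrix.isUnit_iff_isUnit_det G).1 (hG.isUnit hβ hc1)),
      Matrix.one_mulVec]
  have hx := hG.sum_abs_le hβ (G⁻¹ *ᵥ b)
  rw [hGx] at hx
  have hbsum := sum_div_blockWeight_le_coherenceSum_sub_blockGain hβ hb hb₀
  nlinarith

end BlockCoherent

section Gram

variable {m n N : ℕ}

lemma blockSize_subtype (S : Finset (Fin n)) (π : Fin n → Fin N) (i : Fin N) :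
    blockSize (fun k : ↥S => π k) i = #(S.filter fun j => π j = i) :=
  card_bij (fun k _ => k.1) (by simp) (fun _ _ _ _ => Subtype.ext)
    (fun j hj => ⟨⟨j, (mem_filter.1 hj).1⟩, by simpa using (mem_filter.1 hj).2, rfl⟩)

lemma isBlockCoherent_gram (A : Matrix (Fin m) (Fin n) ℝ) (π : Fin n → Fin N)
    {μ : ℝ} {α : Fin N → ℝ} (hunit : ∀ j, ∑ i, A i j * A i j = 1)
    (hcoh : ∀ j k, j ≠ k → |∑ i, A i j * A i k| ≤ μ)
    (hblock : ∀ j k, j ≠ k → π j = π k → |∑ i, A i j * A i k| ≤ α (π j) * μ)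
    (S : Finset (Fin n)) :
    IsBlockCoherent (gram A S) (fun k : ↥S => π k) μ α where
  diag k := hunit k
  abs_le k l hkl := hcoh k l (Subtype.coe_injective.ne hkl)
  abs_le_of_eq k l hkl := hblock k l (Subtype.coe_injective.ne hkl)

end Gram

/-- **Piecewise Exact Recovery Condition.**
Suppose `A` has unit-norm columns partitioned into `N` blocks by `π`, overall coherence
bounded by `μ > 0`, within-block coherence of block `i` bounded by `α i * μ` with
`α i ∈ [0,1)`.  Let `S` be a support set meeting block `i` in `s i ≥ 1` columns, and let
`Z` maximize `(1 + α i μ)/((1 - α i) s i)`.  If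
`2 ∑ i, μ s i / (1 + α i μ + (1 - α i) μ s i) <
  (1 + α Z μ + 2 (1 - α Z) μ s Z)/(1 + α Z μ + (1 - α Z) μ s Z)`,
then the Gram matrix `A_Sᵀ A_S` is invertible and the Exact Recovery Condition
`‖(A_Sᵀ A_S)⁻¹ A_Sᵀ a_j‖₁ < 1` holds for every column index `j ∉ S`. -/
theorem piecewise_erc {m n N : ℕ}
    (A : Matrix (Fin m) (Fin n) ℝ) (π : Fin n → Fin N)
    (hunit : ∀ j, ∑ i, A i j * A i j = 1)
    (μ : ℝ) (hμ : 0 < μ)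
    (hcoh : ∀ j k, j ≠ k → |∑ i, A i j * A i k| ≤ μ)
    (α : Fin N → ℝ) (hα0 : ∀ i, 0 ≤ α i) (hα1 : ∀ i, α i < 1)
    (hblock : ∀ j k, j ≠ k → π j = π k → |∑ i, A i j * A i k| ≤ α (π j) * μ)
    (S : Finset (Fin n))
    (s : Fin N → ℕ) (hs : ∀ i, s i = (S.filter fun j => π j = i).card)
    (hs1 : ∀ i, 1 ≤ s i)
    (Z : Fin N)
    (hZ : ∀ i, (1 + α i * μ) / ((1 - α i) * (s i : ℝ)) ≤
      (1 + α Z * μ) / ((1 - α Z) * (s Z : ℝ)))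
    (hcond : 2 * ∑ i, μ * (s i : ℝ) / (1 + α i * μ + (1 - α i) * μ * (s i : ℝ)) <
      (1 + α Z * μ + 2 * (1 - α Z) * μ * (s Z : ℝ)) /
        (1 + α Z * μ + (1 - α Z) * μ * (s Z : ℝ))) :
    IsUnit (gram A S) ∧
      ∀ j ∉ S, ∑ k : ↥S,
        |Matrix.mulVec (gram A S)⁻¹ (fun l : ↥S => ∑ i, A i (l : Fin n) * A i j) k| < 1 := by
  set p : ↥S → Fin N := fun k => π k
  obtain rfl : s = blockSize p :=
    funext fun i => (hs i).trans (blockSize_subtype S π i).symm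
  have hG := isBlockCoherent_gram A π hunit hcoh hblock S
  have hα1' i := (hα1 i).le
  have hcZ : 2 * coherenceSum μ α (blockSize p) < 1 + blockGain μ α (blockSize p) Z := by
    rwa [one_add_blockGain hμ.le (hα0 Z) (hα1' Z)]
  refine ⟨hG.isUnit (fun i => blockWeight_pos hμ.le (hα0 i) (hα1' i))
    (by linarith [blockGain_lt_one (s := blockSize p) hμ.le (hα0 Z) (hα1' Z)]),
    fun j hj => hG.sum_abs_inv_mulVec_lt_one hμ.le hα0 hα1' (i₀ := π j) ?_ ?_ ?_⟩
  · exact fun k => hcoh k j (ne_of_mem_of_not_mem k.2 hj)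
  · exact fun k hk => hk ▸ hblock k j (ne_of_mem_of_not_mem k.2 hj) hk
  · linarith [blockGain_le_blockGain hμ.le (hα0 _) (hα1 _) (hs1 _) (hα0 _) (hα1 _) (hs1 Z)
      (hZ (π j))]
end

section
/- Let A = [A₁, A₂] ∈ ℝ^{m×n} have unit ℓ²-norm columns partitioned into two blocks. Suppose μ > 0 satisfies |⟨a_j, a_k⟩| ≤ μ for all distinct columns, and α₁, α₂ ∈ [0,1) with α₁ ≥ α₂ satisfy |⟨a_j, a_k⟩| ≤ α_i μ for distinct columns within block i (i = 1,2). Let S be a support set with s_i = |S ∩ (block i)|, 1 ≤ s₁ ≤ s₂. If (1 + α₂μ + (1 − α₂)μ s₂)(2α₁μ s₁ − α₁μ − 1) + 2μ s₂(1 + α₁μ + (1 − α₁)μ s₁) < 0, then the Gram matrix A_Sᵀ A_S is invertible and ‖(A_Sᵀ A_S)⁻¹ A_Sᵀ a_j‖₁ < 1 for every column index j ∉ S. -/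
/-!
Write `G = A_Sᵀ A_S` and `G x = v`. Since `G` has unit diagonal,
`|x_k| ≤ |v_k| + ∑_{l ≠ k} |G_kl| |x_l|`; summing over each block gives
`a₁ X₁ ≤ V₁ + b₁ X₂` and `a₂ X₂ ≤ V₂ + b₂ X₁` for the block ℓ¹-norms `X_i` of `x` and `V_i` of `v`,
where `a_i = 1 - α_i μ (s_i - 1)` and `b_i = μ s_i`. Eliminating gives
`D ‖x‖₁ ≤ (a₂ + b₂) V₁ + (a₁ + b₁) V₂` with `D = a₁ a₂ - b₁ b₂`. For `v = A_Sᵀ a_j` with `j` in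
the first block the right-hand side is at most `(a₂ + b₂) s₁ α₁ μ + (a₁ + b₁) s₂ μ`, and the
hypothesis on `s₁, s₂` says precisely that this is `< D`; a column of the second block gives a
smaller bound. Taking `v = 0` shows that `G` is injective.
-/

open Finset
open scoped Matrix

lemma det_mul_add_le_of_le_add_mul {a₁ a₂ b₁ b₂ X₁ X₂ V₁ V₂ : ℝ} (hab₁ : 0 ≤ a₁ + b₁)
    (hab₂ : 0 ≤ a₂ + b₂) (h₁ : a₁ * X₁ ≤ V₁ + b₁ * X₂) (h₂ : a₂ * X₂ ≤ V₂ + b₂ * X₁) :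
    (a₁ * a₂ - b₁ * b₂) * (X₁ + X₂) ≤ (a₂ + b₂) * V₁ + (a₁ + b₁) * V₂ := by
  linear_combination (a₂ + b₂) * h₁ + (a₁ + b₁) * h₂

lemma one_sub_mul_add_mul_nonneg {c d s : ℝ} (hc : 0 ≤ c) (hcd : c ≤ d) (hs : 0 ≤ s) :
    0 ≤ 1 - c * (s - 1) + d * s := by
  nlinarith [mul_nonneg (sub_nonneg.2 hcd) hs]

section L1Bound

variable {ι : Type*} [Fintype ι] [DecidableEq ι] {G : Matrix ι ι ℝ} {x v : ι → ℝ}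

lemma abs_le_of_mulVec_eq_of_diag_eq_one (hdiag : ∀ k, G k k = 1) (hGx : G *ᵥ x = v)
    {P : Finset ι} {k : ι} (hk : k ∈ P) :
    |x k| ≤ |v k| + ∑ l ∈ P.erase k, |G k l| * |x l| + ∑ l ∈ Pᶜ, |G k l| * |x l| := by
  have hrow : v k = x k + ∑ l ∈ P.erase k, G k l * x l + ∑ l ∈ Pᶜ, G k l * x l := by
    rw [← hGx, Matrix.mulVec, dotProduct, ← sum_add_sum_compl P, ← add_sum_erase P _ hk, hdiag,
      one_mul]
  have habs : ∀ s : Finset ι, |∑ l ∈ s, G k l * x l| ≤ ∑ l ∈ s, |G k l| * |x l| := fun s =>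
    (abs_sum_le_sum_abs _ _).trans_eq (sum_congr rfl fun l _ => abs_mul _ _)
  calc |x k| = |v k - ∑ l ∈ P.erase k, G k l * x l - ∑ l ∈ Pᶜ, G k l * x l| := by
        rw [hrow]; ring_nf
    _ ≤ |v k| + |∑ l ∈ P.erase k, G k l * x l| + |∑ l ∈ Pᶜ, G k l * x l| :=
        (abs_sub _ _).trans (by gcongr; exact abs_sub _ _)
    _ ≤ _ := by gcongr <;> exact habs _

lemma mul_sum_abs_le_of_mulVec_eq_of_diag_eq_one (hdiag : ∀ k, G k k = 1) (hGx : G *ᵥ x = v)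
    {P : Finset ι} {c d : ℝ} (hin : ∀ k ∈ P, ∀ l ∈ P, k ≠ l → |G k l| ≤ c)
    (hout : ∀ k ∈ P, ∀ l ∉ P, |G k l| ≤ d) :
    (1 - c * (#P - 1)) * ∑ k ∈ P, |x k| ≤ ∑ k ∈ P, |v k| + d * #P * ∑ l ∈ Pᶜ, |x l| := by
  have hrows := sum_le_sum fun k (hk : k ∈ P) => abs_le_of_mulVec_eq_of_diag_eq_one hdiag hGx hk
  rw [sum_add_distrib, sum_add_distrib] at hrows
  have hin_sum : ∑ k ∈ P, ∑ l ∈ P.erase k, |G k l| * |x l| ≤ c * (#P - 1) * ∑ k ∈ P, |x k| :=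
    calc _ ≤ ∑ k ∈ P, ∑ l ∈ P.erase k, c * |x l| :=
          sum_le_sum fun k hk => sum_le_sum fun l hl => mul_le_mul_of_nonneg_right
            (hin k hk l (mem_of_mem_erase hl) (ne_of_mem_erase hl).symm) (abs_nonneg _)
      _ = ∑ k ∈ P, c * (∑ l ∈ P, |x l| - |x k|) :=
          sum_congr rfl fun k hk => by rw [← mul_sum, sum_erase_eq_sub hk]
      _ = _ := by rw [← mul_sum, sum_sub_distrib, sum_const, nsmul_eq_mul]; ring
  have hout_sum : ∑ k ∈ P, ∑ l ∈ Pᶜ, |G k l| * |x l| ≤ d * #P * ∑ l ∈ Pᶜ, |x l| :=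
    calc _ ≤ ∑ k ∈ P, ∑ l ∈ Pᶜ, d * |x l| :=
          sum_le_sum fun k hk => sum_le_sum fun l hl => mul_le_mul_of_nonneg_right
            (hout k hk l (mem_compl.1 hl)) (abs_nonneg _)
      _ = _ := by rw [sum_const, nsmul_eq_mul, ← mul_sum]; ring
  linarith

lemma mul_sum_abs_le_of_mulVec_eq_of_two_block (hdiag : ∀ k, G k k = 1) (hGx : G *ᵥ x = v)
    (P : Finset ι) {c₁ c₂ d : ℝ} (hc₁ : 0 ≤ c₁) (hc₂ : 0 ≤ c₂) (hc₁d : c₁ ≤ d) (hc₂d : c₂ ≤ d)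
    (hin₁ : ∀ k ∈ P, ∀ l ∈ P, k ≠ l → |G k l| ≤ c₁)
    (hin₂ : ∀ k ∈ Pᶜ, ∀ l ∈ Pᶜ, k ≠ l → |G k l| ≤ c₂)
    (hcoh : ∀ k l, k ≠ l → |G k l| ≤ d) :
    ((1 - c₁ * (#P - 1)) * (1 - c₂ * (#Pᶜ - 1)) - d * #P * (d * #Pᶜ)) * ∑ k, |x k| ≤
      (1 - c₂ * (#Pᶜ - 1) + d * #Pᶜ) * ∑ k ∈ P, |v k| +
        (1 - c₁ * (#P - 1) + d * #P) * ∑ k ∈ Pᶜ, |v k| := by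
  have h₁ := mul_sum_abs_le_of_mulVec_eq_of_diag_eq_one hdiag hGx hin₁
    fun k hk l hl => hcoh k l (ne_of_mem_of_not_mem hk hl)
  have h₂ := mul_sum_abs_le_of_mulVec_eq_of_diag_eq_one hdiag hGx hin₂
    fun k hk l hl => hcoh k l (ne_of_mem_of_not_mem hk hl)
  rw [compl_compl] at h₂
  rw [← sum_add_sum_compl P]
  exact det_mul_add_le_of_le_add_mul (one_sub_mul_add_mul_nonneg hc₁ hc₁d (#P).cast_nonneg)
    (one_sub_mul_add_mul_nonneg hc₂ hc₂d (#Pᶜ).cast_nonneg) h₁ h₂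

lemma isUnit_of_mul_sum_abs_le {D β₁ β₂ : ℝ} {P Q : Finset ι} (hD : 0 < D)
    (h : ∀ x, D * ∑ k, |x k| ≤ β₁ * ∑ k ∈ P, |(G *ᵥ x) k| + β₂ * ∑ k ∈ Q, |(G *ᵥ x) k|) :
    IsUnit G := by
  rw [← Matrix.mulVec_injective_iff_isUnit]
  intro x y hxy
  have hsum : ∑ k, |(x - y) k| ≤ 0 :=
    nonpos_of_mul_nonpos_right (by simpa [Matrix.mulVec_sub, hxy] using h (x - y)) hD
  funext k
  simpa [sub_eq_zero] using
    abs_nonpos_iff.1 ((single_le_sum (fun k _ => abs_nonneg ((x - y) k)) (mem_univ k)).trans hsum)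

end L1Bound

lemma card_filter_univ_subtype {α : Type*} (p : α → Prop) [DecidablePred p] (S : Finset α) :
    #({k | p k} : Finset S) = #{j ∈ S | p j} := by
  rw [univ_eq_attach, filter_attach, card_map, card_attach]

/-- Where `α₂ ≤ α₁` and `s₁ ≤ s₂` enter: columns of the second block are the easier case. -/
lemma two_bases_numerator_le {μ α₁ α₂ s₁ s₂ : ℝ} (hμ : 0 ≤ μ) (hα₂0 : 0 ≤ α₂) (hα₂1 : α₂ ≤ 1)
    (hα : α₂ ≤ α₁) (hs₁ : 0 ≤ s₁) (hs : s₁ ≤ s₂) :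
    (1 - α₂ * μ * (s₂ - 1) + μ * s₂) * (s₁ * μ) + (1 - α₁ * μ * (s₁ - 1) + μ * s₁) * (s₂ * (α₂ * μ))
      ≤ (1 - α₂ * μ * (s₂ - 1) + μ * s₂) * (s₁ * (α₁ * μ)) +
        (1 - α₁ * μ * (s₁ - 1) + μ * s₁) * (s₂ * μ) := by
  have hu : (1 - α₁) * s₁ ≤ (1 - α₂) * s₂ := by nlinarith
  nlinarith [mul_nonneg (mul_nonneg (by positivity : 0 ≤ 1 + α₂ * μ) hμ) (sub_nonneg.2 hu),
    mul_nonneg (mul_nonneg (mul_nonneg (sub_nonneg.2 hα) hμ) hμ)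
      (mul_nonneg (sub_nonneg.2 hα₂1) (hs₁.trans hs))]

section TwoBases

variable {m n : ℕ} {A : Matrix (Fin m) (Fin n) ℝ} {π : Fin n → Fin 2} {S : Finset (Fin n)}
  {μ α₁ α₂ : ℝ} {s₁ s₂ : ℕ}

lemma gram_mul_sum_abs_le (hunit : ∀ j, ∑ i, A i j * A i j = 1) (hμ : 0 ≤ μ)
    (hcoh : ∀ j k, j ≠ k → |∑ i, A i j * A i k| ≤ μ)
    (hα₁0 : 0 ≤ α₁) (hα₁1 : α₁ ≤ 1) (hα₂0 : 0 ≤ α₂) (hα₂1 : α₂ ≤ 1)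
    (hblock1 : ∀ j k, j ≠ k → π j = 0 → π k = 0 → |∑ i, A i j * A i k| ≤ α₁ * μ)
    (hblock2 : ∀ j k, j ≠ k → π j = 1 → π k = 1 → |∑ i, A i j * A i k| ≤ α₂ * μ)
    (hs₁ : s₁ = #{j ∈ S | π j = 0}) (hs₂ : s₂ = #{j ∈ S | π j = 1}) (x : S → ℝ) :
    ((1 - α₁ * μ * (s₁ - 1)) * (1 - α₂ * μ * (s₂ - 1)) - μ * s₁ * (μ * s₂)) * ∑ k, |x k| ≤
      (1 - α₂ * μ * (s₂ - 1) + μ * s₂) * ∑ k ∈ ({k | π k = 0} : Finset S), |(gram A S *ᵥ x) k| +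
        (1 - α₁ * μ * (s₁ - 1) + μ * s₁) * ∑ k ∈ ({k | π k = 1} : Finset S), |(gram A S *ᵥ x) k|
    := by
  have hcompl : ({k | π k = 0} : Finset S)ᶜ = ({k | π k = 1} : Finset S) := by ext k; simp; omega
  have h := mul_sum_abs_le_of_mulVec_eq_of_two_block (G := gram A S) (x := x)
    (fun k => hunit k) rfl {k | π k = 0} (mul_nonneg hα₁0 hμ) (mul_nonneg hα₂0 hμ)
    (mul_le_of_le_one_left hμ hα₁1) (mul_le_of_le_one_left hμ hα₂1)
    (fun k hk l hl hkl => hblock1 k l (Subtype.coe_injective.ne hkl)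
      ((mem_filter_univ k).1 hk) ((mem_filter_univ l).1 hl))
    (hcompl ▸ fun k hk l hl hkl => hblock2 k l (Subtype.coe_injective.ne hkl)
      ((mem_filter_univ k).1 hk) ((mem_filter_univ l).1 hl))
    (fun k l hkl => hcoh k l (Subtype.coe_injective.ne hkl))
  rwa [hcompl, card_filter_univ_subtype (π · = 0), card_filter_univ_subtype (π · = 1), ← hs₁,
    ← hs₂] at h

lemma sum_abs_gram_column_le {j : Fin n} (hj : j ∉ S) {b : Fin 2} {s : ℕ}
    (hs : s = #{l ∈ S | π l = b}) {γ : ℝ} (h : ∀ k, k ≠ j → π k = b → |∑ i, A i k * A i j| ≤ γ) :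
    ∑ k ∈ ({k | π k = b} : Finset S), |∑ i, A i k * A i j| ≤ s * γ := by
  rw [hs, ← card_filter_univ_subtype (π · = b), ← nsmul_eq_mul]
  exact sum_le_card_nsmul _ _ _ fun k hk =>
    h k (fun hkj => hj (hkj ▸ k.2)) ((mem_filter_univ k).1 hk)

lemma weighted_sum_abs_gram_column_le (hμ : 0 ≤ μ)
    (hcoh : ∀ j k, j ≠ k → |∑ i, A i j * A i k| ≤ μ)
    (hα₁0 : 0 ≤ α₁) (hα₁1 : α₁ ≤ 1) (hα₂0 : 0 ≤ α₂) (hα₂1 : α₂ ≤ 1) (hα : α₂ ≤ α₁)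
    (hblock1 : ∀ j k, j ≠ k → π j = 0 → π k = 0 → |∑ i, A i j * A i k| ≤ α₁ * μ)
    (hblock2 : ∀ j k, j ≠ k → π j = 1 → π k = 1 → |∑ i, A i j * A i k| ≤ α₂ * μ)
    (hs₁ : s₁ = #{j ∈ S | π j = 0}) (hs₂ : s₂ = #{j ∈ S | π j = 1}) (hs12 : s₁ ≤ s₂)
    {j : Fin n} (hj : j ∉ S) :
    (1 - α₂ * μ * (s₂ - 1) + μ * s₂) * ∑ k ∈ ({k | π k = 0} : Finset S), |∑ i, A i k * A i j| +
        (1 - α₁ * μ * (s₁ - 1) + μ * s₁) * ∑ k ∈ ({k | π k = 1} : Finset S), |∑ i, A i k * A i j|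
      ≤ (1 - α₂ * μ * (s₂ - 1) + μ * s₂) * (s₁ * (α₁ * μ)) +
        (1 - α₁ * μ * (s₁ - 1) + μ * s₁) * (s₂ * μ) := by
  have := one_sub_mul_add_mul_nonneg (mul_nonneg hα₁0 hμ) (mul_le_of_le_one_left hμ hα₁1)
    s₁.cast_nonneg
  have := one_sub_mul_add_mul_nonneg (mul_nonneg hα₂0 hμ) (mul_le_of_le_one_left hμ hα₂1)
    s₂.cast_nonneg
  obtain hj₀ | hj₁ : π j = 0 ∨ π j = 1 := by omega
  · gcongr
    · exact sum_abs_gram_column_le hj hs₁ fun k hk hk₀ => hblock1 k j hk hk₀ hj₀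
    · exact sum_abs_gram_column_le hj hs₂ fun k hk _ => hcoh k j hk
  · refine le_trans ?_ (two_bases_numerator_le hμ hα₂0 hα₂1 hα s₁.cast_nonneg
      (by exact_mod_cast hs12))
    gcongr
    · exact sum_abs_gram_column_le hj hs₁ fun k hk _ => hcoh k j hk
    · exact sum_abs_gram_column_le hj hs₂ fun k hk hk₁ => hblock2 k j hk hk₁ hj₁

end TwoBases

theorem two_bases_erc_general {m n : ℕ}
    (A : Matrix (Fin m) (Fin n) ℝ) (π : Fin n → Fin 2)
    (hunit : ∀ j, ∑ i, A i j * A i j = 1)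
    (μ : ℝ) (hμ : 0 < μ)
    (hcoh : ∀ j k, j ≠ k → |∑ i, A i j * A i k| ≤ μ)
    (α₁ α₂ : ℝ) (hα₁0 : 0 ≤ α₁) (hα₁1 : α₁ < 1) (hα₂0 : 0 ≤ α₂) (hα₂1 : α₂ < 1)
    (hα : α₂ ≤ α₁)
    (hblock1 : ∀ j k, j ≠ k → π j = 0 → π k = 0 → |∑ i, A i j * A i k| ≤ α₁ * μ)
    (hblock2 : ∀ j k, j ≠ k → π j = 1 → π k = 1 → |∑ i, A i j * A i k| ≤ α₂ * μ)
    (S : Finset (Fin n))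
    (s₁ s₂ : ℕ)
    (hs₁ : s₁ = (S.filter fun j => π j = 0).card)
    (hs₂ : s₂ = (S.filter fun j => π j = 1).card)
    (hs12 : s₁ ≤ s₂)
    (hcond : (1 + α₂ * μ + (1 - α₂) * μ * (s₂ : ℝ)) *
        (2 * α₁ * μ * (s₁ : ℝ) - α₁ * μ - 1) +
        2 * μ * (s₂ : ℝ) * (1 + α₁ * μ + (1 - α₁) * μ * (s₁ : ℝ)) < 0) :
    IsUnit (gram A S) ∧
      ∀ j ∉ S, ∑ k : ↥S,
        |Matrix.mulVec (gram A S)⁻¹ (fun l : ↥S => ∑ i, A i (l : Fin n) * A i j) k| < 1 := by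
  have hbound := gram_mul_sum_abs_le hunit hμ.le hcoh hα₁0 hα₁1.le hα₂0 hα₂1.le hblock1 hblock2
    hs₁ hs₂
  have hβ₁ := one_sub_mul_add_mul_nonneg (mul_nonneg hα₁0 hμ.le)
    (mul_le_of_le_one_left hμ.le hα₁1.le) s₁.cast_nonneg
  have hβ₂ := one_sub_mul_add_mul_nonneg (mul_nonneg hα₂0 hμ.le)
    (mul_le_of_le_one_left hμ.le hα₂1.le) s₂.cast_nonneg
  have hmargin : (1 - α₂ * μ * (s₂ - 1) + μ * s₂) * (s₁ * (α₁ * μ)) +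
      (1 - α₁ * μ * (s₁ - 1) + μ * s₁) * (s₂ * μ) <
        (1 - α₁ * μ * (s₁ - 1)) * (1 - α₂ * μ * (s₂ - 1)) - μ * s₁ * (μ * s₂) := by
    linear_combination hcond
  have hD := hmargin.trans_le' (by positivity)
  have hG : IsUnit (gram A S) := isUnit_of_mul_sum_abs_le hD hbound
  refine ⟨hG, fun j hj => ?_⟩
  have hx := hbound ((gram A S)⁻¹ *ᵥ fun l => ∑ i, A i l * A i j)
  rw [Matrix.mulVec_mulVec, Matrix.mul_nonsing_inv _ ((gram A S).isUnit_iff_isUnit_det.1 hG),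
    Matrix.one_mulVec] at hx
  refine lt_of_mul_lt_mul_left (hx.trans_lt ?_) hD.le
  rw [mul_one]
  exact (weighted_sum_abs_gram_column_le hμ.le hcoh hα₁0 hα₁1.le hα₂0 hα₂1.le hα hblock1 hblock2
    hs₁ hs₂ hs12 hj).trans_lt hmargin

/-- **Exact Recovery Condition for a union of two general bases.**
Suppose `A = [A₁, A₂]` has unit-norm columns partitioned into two blocks by `π`, overall
coherence bounded by `μ > 0`, within-block coherences bounded by `α₁ μ` and `α₂ μ` with
`α₁, α₂ ∈ [0,1)` and `α₁ ≥ α₂`.  Let `S` meet block `1` in `s₁` columns and block `2` in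
`s₂` columns with `1 ≤ s₁ ≤ s₂`.  If
`(1 + α₂μ + (1 - α₂)μ s₂)(2α₁μ s₁ - α₁μ - 1) + 2μ s₂ (1 + α₁μ + (1 - α₁)μ s₁) < 0`,
then the Gram matrix `A_Sᵀ A_S` is invertible and the Exact Recovery Condition
`‖(A_Sᵀ A_S)⁻¹ A_Sᵀ a_j‖₁ < 1` holds for every column index `j ∉ S`. -/
theorem two_bases_erc {m n : ℕ}
    (A : Matrix (Fin m) (Fin n) ℝ) (π : Fin n → Fin 2)
    (hunit : ∀ j, ∑ i, A i j * A i j = 1)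
    (μ : ℝ) (hμ : 0 < μ)
    (hcoh : ∀ j k, j ≠ k → |∑ i, A i j * A i k| ≤ μ)
    (α₁ α₂ : ℝ) (hα₁0 : 0 ≤ α₁) (hα₁1 : α₁ < 1) (hα₂0 : 0 ≤ α₂) (hα₂1 : α₂ < 1)
    (hα : α₂ ≤ α₁)
    (hblock1 : ∀ j k, j ≠ k → π j = 0 → π k = 0 → |∑ i, A i j * A i k| ≤ α₁ * μ)
    (hblock2 : ∀ j k, j ≠ k → π j = 1 → π k = 1 → |∑ i, A i j * A i k| ≤ α₂ * μ)
    (S : Finset (Fin n))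
    (s₁ s₂ : ℕ)
    (hs₁ : s₁ = (S.filter fun j => π j = 0).card)
    (hs₂ : s₂ = (S.filter fun j => π j = 1).card)
    (hs1 : 1 ≤ s₁) (hs12 : s₁ ≤ s₂)
    (hcond : (1 + α₂ * μ + (1 - α₂) * μ * (s₂ : ℝ)) *
        (2 * α₁ * μ * (s₁ : ℝ) - α₁ * μ - 1) +
        2 * μ * (s₂ : ℝ) * (1 + α₁ * μ + (1 - α₁) * μ * (s₁ : ℝ)) < 0) :
    IsUnit (gram A S) ∧
      ∀ j ∉ S, ∑ k : ↥S,
        |Matrix.mulVec (gram A S)⁻¹ (fun l : ↥S => ∑ i, A i (l : Fin n) * A i j) k| < 1 :=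
  two_bases_erc_general A π hunit μ hμ hcoh α₁ α₂ hα₁0 hα₁1 hα₂0 hα₂1 hα hblock1 hblock2 S s₁ s₂ hs₁
    hs₂ hs12 hcond
end

section
/- Let A ∈ ℝ^{m×n}, let x ∈ ℝⁿ satisfy Ax = b with support S = supp(x), and suppose the Gram matrix A_Sᵀ A_S is invertible and the Exact Recovery Condition holds: ‖(A_Sᵀ A_S)⁻¹ A_Sᵀ a_j‖₁ < 1 for every column index j ∉ S. Then x is the unique minimizer of the ℓ¹ norm over solutions of the system: every y ∈ ℝⁿ with Ay = b and y ≠ x satisfies ‖y‖₁ > ‖x‖₁. -/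
/-!
Basis Pursuit is certified by duality. Let `s` be the sign pattern of `x` on its support `S`
and take `w = A_S (A_Sᵀ A_S)⁻¹ s`, the least-norm solution of `A_Sᵀ w = s`. The vector
`c = Aᵀ w` lies in the row space of `A`, so `c ⬝ᵥ x = c ⬝ᵥ y` whenever `A x = A y`; it equals
`s` on `S`, and off `S` its entries are `s ⬝ᵥ (A_Sᵀ A_S)⁻¹ A_Sᵀ a_j`, of absolute value less
than `1` by the ERC. Hence `‖x‖₁ = c ⬝ᵥ x = c ⬝ᵥ y ≤ ‖y‖₁`, with strict inequality as soon as
`y` has a nonzero entry off `S`, which the invertibility of `A_Sᵀ A_S` forces when `y ≠ x`.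
-/

open scoped Matrix

section Certificate

open Matrix

variable {R ι : Type*} [Ring R] [LinearOrder R] [IsStrictOrderedRing R] [Fintype ι]

theorem abs_sign_le_one (a : R) : |(SignType.sign a : R)| ≤ 1 := by
  cases SignType.sign a <;> simp

theorem abs_dotProduct_le_sum_abs {s z : ι → R} (hs : ∀ k, |s k| ≤ 1) :
    |s ⬝ᵥ z| ≤ ∑ k, |z k| :=
  (Finset.abs_sum_le_sum_abs _ _).trans <| Finset.sum_le_sum fun k _ => by
    rw [abs_mul]
    exact mul_le_of_le_one_left (abs_nonneg _) (hs k)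

theorem dotProduct_lt_sum_abs {c y : ι → R} (hc : ∀ j, |c j| ≤ 1)
    (hstrict : ∃ j, |c j| < 1 ∧ y j ≠ 0) : c ⬝ᵥ y < ∑ j, |y j| := by
  obtain ⟨j₀, hcj₀, hyj₀⟩ := hstrict
  have hle (j : ι) : c j * y j ≤ |c j| * |y j| := (le_abs_self _).trans (abs_mul _ _).le
  exact Finset.sum_lt_sum (fun j _ => (hle j).trans (mul_le_of_le_one_left (abs_nonneg _) (hc j)))
    ⟨j₀, Finset.mem_univ _, (hle j₀).trans_lt (mul_lt_of_lt_one_left (abs_pos.mpr hyj₀) hcj₀)⟩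

theorem sum_abs_lt_of_dualCertificate (S : Finset ι) {x y c : ι → R} (hxy : c ⬝ᵥ x = c ⬝ᵥ y)
    (hxS : ∀ j ∉ S, x j = 0) (hcS : ∀ j ∈ S, c j = SignType.sign (x j))
    (hc : ∀ j ∉ S, |c j| < 1) (hy : ∃ j ∉ S, y j ≠ 0) : ∑ j, |x j| < ∑ j, |y j| := by
  have hsign (j : ι) : c j * x j = |x j| := by
    by_cases hj : j ∈ S
    · rw [hcS j hj, sign_mul_self]
    · simp [hxS j hj]
  have hc_le (j : ι) : |c j| ≤ 1 := by
    by_cases hj : j ∈ S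
    · rw [hcS j hj]
      exact abs_sign_le_one _
    · exact (hc j hj).le
  obtain ⟨j₀, hj₀, hyj₀⟩ := hy
  calc ∑ j, |x j| = c ⬝ᵥ x := Finset.sum_congr rfl fun j _ => (hsign j).symm
    _ = c ⬝ᵥ y := hxy
    _ < ∑ j, |y j| := dotProduct_lt_sum_abs hc_le ⟨j₀, hc j₀ hj₀, hyj₀⟩

end Certificate

section Columns

open Matrix

variable {R κ ι σ : Type*}

def columns (A : Matrix κ ι R) (S : Finset ι) : Matrix κ S R :=
  A.submatrix id (↑)

variable [CommRing R]

theorem mulVec_eq_columns_mulVec [Fintype ι] {A : Matrix κ ι R} {S : Finset ι} {x : ι → R}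
    (hx : ∀ j ∉ S, x j = 0) : A *ᵥ x = columns A S *ᵥ fun k => x k := by
  ext i
  simp only [mulVec, dotProduct, columns, submatrix_apply, id]
  rw [Finset.sum_coe_sort S (fun j => A i j * x j)]
  exact (Finset.sum_subset (Finset.subset_univ S) fun j _ hj => by simp [hx j hj]).symm

variable [Fintype κ]

theorem vecMul_columns_apply (w : κ → R) (A : Matrix κ ι R) {S : Finset ι} (k : S) :
    (w ᵥ* columns A S) k = (w ᵥ* A) k :=
  rfl

theorem mulVec_injective_of_isUnit_det_transpose_mul_self [Fintype σ] [DecidableEq σ]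
    {B : Matrix κ σ R} (hB : IsUnit (Bᵀ * B).det) : Function.Injective (B *ᵥ ·) :=
  Function.LeftInverse.injective (g := (((Bᵀ * B)⁻¹ * Bᵀ) *ᵥ ·)) fun v => by
    dsimp only
    rw [mulVec_mulVec, Matrix.mul_assoc, nonsing_inv_mul _ hB, one_mulVec]

variable [DecidableEq ι]

theorem eq_of_mulVec_eq_of_forall_notMem_eq_zero [Fintype ι] {A : Matrix κ ι R} {S : Finset ι}
    (hG : IsUnit ((columns A S)ᵀ * columns A S).det) {x y : ι → R}
    (hxy : A *ᵥ x = A *ᵥ y) (hx : ∀ j ∉ S, x j = 0) (hy : ∀ j ∉ S, y j = 0) : x = y := by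
  rw [mulVec_eq_columns_mulVec hx, mulVec_eq_columns_mulVec hy] at hxy
  have hS := mulVec_injective_of_isUnit_det_transpose_mul_self hG hxy
  funext j
  by_cases hj : j ∈ S
  · exact congrFun hS ⟨j, hj⟩
  · rw [hx j hj, hy j hj]

noncomputable def dualCertificate (A : Matrix κ ι R) (S : Finset ι) (s : S → R) : ι → R :=
  (columns A S *ᵥ ((columns A S)ᵀ * columns A S)⁻¹ *ᵥ s) ᵥ* A

theorem dualCertificate_apply_coe {A : Matrix κ ι R} {S : Finset ι}
    (hG : IsUnit ((columns A S)ᵀ * columns A S).det) (s : S → R) (k : S) :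
    dualCertificate A S s k = s k := by
  rw [dualCertificate, ← vecMul_columns_apply, ← mulVec_transpose, mulVec_mulVec, mulVec_mulVec,
    mul_nonsing_inv _ hG, one_mulVec]

theorem dualCertificate_apply (A : Matrix κ ι R) (S : Finset ι) (s : S → R) (j : ι) :
    dualCertificate A S s j =
      s ⬝ᵥ ((columns A S)ᵀ * columns A S)⁻¹ *ᵥ (columns A S)ᵀ *ᵥ A.col j := by
  have hsymm : ((columns A S)ᵀ * columns A S)⁻¹.IsSymm :=
    IsSymm.inv (by rw [IsSymm, transpose_mul, transpose_transpose])
  rw [dualCertificate, vecMul_apply, dotProduct_comm, dotProduct_mulVec, ← mulVec_transpose,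
    dotProduct_mulVec, dotProduct_comm, ← mulVec_transpose, hsymm.eq]

theorem dualCertificate_dotProduct_eq_of_mulVec_eq [Fintype ι] {A : Matrix κ ι R} {S : Finset ι}
    {s : S → R} {x y : ι → R} (hxy : A *ᵥ x = A *ᵥ y) :
    dualCertificate A S s ⬝ᵥ x = dualCertificate A S s ⬝ᵥ y := by
  rw [dualCertificate, ← dotProduct_mulVec, ← dotProduct_mulVec, hxy]

end Columns

theorem gram_eq_transpose_mul_columns {m n : ℕ} (A : Matrix (Fin m) (Fin n) ℝ)
    (S : Finset (Fin n)) : gram A S = (columns A S)ᵀ * columns A S := by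
  ext j k
  simp [gram, Matrix.mul_apply, columns]

/-- **The Exact Recovery Condition implies exact recovery by Basis Pursuit.**
If `x` solves `A x = b` with support `S`, the Gram matrix `A_Sᵀ A_S` is invertible, and
`‖(A_Sᵀ A_S)⁻¹ A_Sᵀ a_j‖₁ < 1` for every column index `j ∉ S`, then `x` is the unique
`ℓ¹`-minimizer: every `y ≠ x` with `A y = b` satisfies `‖y‖₁ > ‖x‖₁`. -/
theorem erc_implies_l1_uniqueness {m n : ℕ}
    (A : Matrix (Fin m) (Fin n) ℝ) (x : Fin n → ℝ) (b : Fin m → ℝ)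
    (hx : A.mulVec x = b)
    (S : Finset (Fin n)) (hS : S = Finset.univ.filter fun j => x j ≠ 0)
    (hinv : IsUnit (gram A S))
    (herc : ∀ j ∉ S, ∑ k : ↥S,
      |Matrix.mulVec (gram A S)⁻¹ (fun l : ↥S => ∑ i, A i (l : Fin n) * A i j) k| < 1) :
    ∀ y : Fin n → ℝ, A.mulVec y = b → y ≠ x → ∑ j, |x j| < ∑ j, |y j| := by
  intro y hy hne
  rw [gram_eq_transpose_mul_columns] at hinv herc
  have hdet := (Matrix.isUnit_iff_isUnit_det _).mp hinv
  have hxS : ∀ j ∉ S, x j = 0 := fun j hj => by simpa [hS] using hj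
  have hyS : ∃ j ∉ S, y j ≠ 0 := by
    by_contra! hy0
    exact hne (eq_of_mulVec_eq_of_forall_notMem_eq_zero hdet (hy.trans hx.symm) hy0 hxS)
  refine sum_abs_lt_of_dualCertificate S
    (c := dualCertificate A S fun k => (SignType.sign (x k) : ℝ))
    (dualCertificate_dotProduct_eq_of_mulVec_eq (hx.trans hy.symm)) hxS
    (fun j hj => dualCertificate_apply_coe hdet _ ⟨j, hj⟩) (fun j hj => ?_) hyS
  rw [dualCertificate_apply]
  exact (abs_dotProduct_le_sum_abs fun k => abs_sign_le_one _).trans_lt (herc j hj)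
end
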